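/- Let 0 < D ≤ 1, set o_1 = (0,1), o_2 = (0,−1) ∈ ℝ², and for x ∈ ℝ² with x ≠ o_1, x ≠ o_2 let ρ_c(x) denote the unique minimizer of ‖u − (1,0)‖ over U(x) = { u ∈ ℝ² : −⟨(x−o_i)/‖x−o_i‖, u⟩ ≤ (‖x−o_i‖² − D²)/(2‖x−o_i‖) for i = 1,2 }. Then: (1) if 0 < D < 1, every Lipschitz constant of the map t ↦ ρ_c((t,0)) on the interval (−D−1, D−1) is at least D/(1−D); (2) if D = 1, the map t ↦ ρ_c((t,0)) is discontinuous at t = 0 (its limit as t ↑ 0 is (0,0) while ρ_c((0,0)) = (1,0)), so ρ_c admits no Lipschitz constant on its domain. -/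

import Mathlib

/-! On the axis `x = (t, 0)` the two constraints read `-(t u₀ ∓ u₁) ≤ (t² + 1 - D²) / 2`; adding them
gives `u₀ ≤ ρ_t := (D² - t² - 1) / (2t)` when `t < 0`, and `(ρ_t, 0)` saturates both, so for
`|t + 1| ≤ D` (where `ρ_t ≤ 1`) it is the point of `U(x)` closest to `(1, 0)`. The difference
quotients of `ρ_t` are `(1 - D²) / (2tt') - 1/2`, which tend to `D / (1 - D)` as `t, t' → D - 1`.
For `D = 1`, `ρ_t = -t/2 → 0` as `t ↑ 0`, while at the origin `(1, 0)` itself is feasible; a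
Lipschitz `ρ_c` would be continuous along the axis. -/

open scoped RealInnerProductSpace

/-- The point `(x, y)` of the Euclidean plane. -/
noncomputable def vec2 (x y : ℝ) : EuclideanSpace ℝ (Fin 2) :=
  (WithLp.equiv 2 (Fin 2 → ℝ)).symm ![x, y]

/-- The feasible set of Example 1 of the paper: the two control-barrier constraints
for the disc obstacles of radius `D` centered at `o₁ = (0,1)` and `o₂ = (0,−1)`. -/
def Ufeas (D : ℝ) (x : EuclideanSpace ℝ (Fin 2)) : Set (EuclideanSpace ℝ (Fin 2)) :=
  {u | -⟪(‖x - vec2 0 1‖)⁻¹ • (x - vec2 0 1), u⟫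
        ≤ (‖x - vec2 0 1‖ ^ 2 - D ^ 2) / (2 * ‖x - vec2 0 1‖) ∧
       -⟪(‖x - vec2 0 (-1)‖)⁻¹ • (x - vec2 0 (-1)), u⟫
        ≤ (‖x - vec2 0 (-1)‖ ^ 2 - D ^ 2) / (2 * ‖x - vec2 0 (-1)‖)}

open Filter Topology Set

local notation "ℝ²" => EuclideanSpace ℝ (Fin 2)

lemma vec2_sub (a b c d : ℝ) : vec2 a b - vec2 c d = vec2 (a - c) (b - d) := by
  ext i; fin_cases i <;> simp [vec2]

lemma vec2_eq_smul (a : ℝ) : vec2 a 0 = a • vec2 1 0 := by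
  ext i; fin_cases i <;> simp [vec2]

@[simp] lemma vec2_apply_zero (a b : ℝ) : vec2 a b 0 = a := rfl

@[simp] lemma vec2_apply_one (a b : ℝ) : vec2 a b 1 = b := rfl

lemma vec2_ne_of_right_ne {a b c d : ℝ} (h : b ≠ d) : vec2 a b ≠ vec2 c d :=
  fun h' => h (by simpa using congrArg (fun v : ℝ² => v 1) h')

lemma vec2_ne_zero_of_right_ne_zero {a b : ℝ} (hb : b ≠ 0) : vec2 a b ≠ 0 := fun h => hb <| by
  simpa using congrArg (fun v : ℝ² => v 1) h

lemma vec2_one_zero_ne_zero : vec2 1 0 ≠ 0 := fun h => by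
  simpa using congrArg (fun v : ℝ² => v 0) h

lemma norm_vec2_sq (a b : ℝ) : ‖vec2 a b‖ ^ 2 = a ^ 2 + b ^ 2 := by
  simp [EuclideanSpace.norm_sq_eq, Fin.sum_univ_two]

lemma norm_vec2_zero (a : ℝ) : ‖vec2 a 0‖ = |a| := by
  simp [EuclideanSpace.norm_eq, Fin.sum_univ_two, Real.sqrt_sq_eq_abs]

lemma norm_vec2_sub_vec2 (a b : ℝ) : ‖vec2 a 0 - vec2 b 0‖ = |a - b| := by
  rw [vec2_sub, sub_self, norm_vec2_zero]

lemma inner_vec2 (a b : ℝ) (u : ℝ²) :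
    ⟪vec2 a b, u⟫ = a * u 0 + b * u 1 := by
  simp [PiLp.inner_apply, Fin.sum_univ_two, vec2]
  ring

lemma neg_inner_normalize_le_iff {E : Type*} [NormedAddCommGroup E] [InnerProductSpace ℝ E]
    {v : E} (hv : v ≠ 0) (u : E) (c : ℝ) :
    -⟪‖v‖⁻¹ • v, u⟫ ≤ c / (2 * ‖v‖) ↔ -⟪v, u⟫ ≤ c / 2 := by
  have hpos : 0 < ‖v‖ := norm_pos_iff.2 hv
  rw [real_inner_smul_left, ← mul_le_mul_iff_right₀ hpos]
  field_simp

lemma mem_Ufeas_vec2_iff (D t : ℝ) (u : ℝ²) :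
    u ∈ Ufeas D (vec2 t 0) ↔
      -(t * u 0 - u 1) ≤ (t ^ 2 + 1 - D ^ 2) / 2 ∧ -(t * u 0 + u 1) ≤ (t ^ 2 + 1 - D ^ 2) / 2 := by
  have h₁ : vec2 t 0 - vec2 0 1 = vec2 t (-1) := by rw [vec2_sub]; norm_num
  have h₂ : vec2 t 0 - vec2 0 (-1) = vec2 t 1 := by rw [vec2_sub]; norm_num
  rw [Ufeas, Set.mem_ofPred_eq, h₁, h₂,
    neg_inner_normalize_le_iff (vec2_ne_zero_of_right_ne_zero (by norm_num)),
    neg_inner_normalize_le_iff (vec2_ne_zero_of_right_ne_zero (by norm_num)),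
    norm_vec2_sq, norm_vec2_sq, inner_vec2, inner_vec2]
  ring_nf

def IsSafeQPSolution (D : ℝ) (ρc : ℝ² → ℝ²) : Prop :=
  ∀ x : ℝ², x ≠ vec2 0 1 → x ≠ vec2 0 (-1) →
    ρc x ∈ Ufeas D x ∧
    (∀ u ∈ Ufeas D x, ‖ρc x - vec2 1 0‖ ≤ ‖u - vec2 1 0‖) ∧
    (∀ ρ' ∈ Ufeas D x,
      (∀ u ∈ Ufeas D x, ‖ρ' - vec2 1 0‖ ≤ ‖u - vec2 1 0‖) → ρ' = ρc x)

lemma norm_vec2_sub_le_of_apply_le {c : ℝ} (hc : c ≤ 1) {u : ℝ²}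
    (hu : u 0 ≤ c) : ‖vec2 c 0 - vec2 1 0‖ ≤ ‖u - vec2 1 0‖ :=
  calc ‖vec2 c 0 - vec2 1 0‖ = 1 - c := by
        rw [norm_vec2_sub_vec2, abs_of_nonpos (by linarith), neg_sub]
    _ ≤ ‖(u - vec2 1 0) 0‖ := by
        rw [Real.norm_eq_abs, PiLp.sub_apply, vec2_apply_zero, abs_sub_comm]
        exact (by linarith : 1 - c ≤ 1 - u 0).trans (le_abs_self _)
    _ ≤ ‖u - vec2 1 0‖ := PiLp.norm_apply_le _ _

noncomputable def rhoAxis (D t : ℝ) : ℝ := (D ^ 2 - t ^ 2 - 1) / (2 * t)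

lemma IsSafeQPSolution.apply_vec2 {D : ℝ} {ρc : ℝ² → ℝ²}
    (hρc : IsSafeQPSolution D ρc) (hD : D ≤ 1) {t : ℝ} (ht : t ∈ Ioo (-D - 1) (D - 1)) :
    ρc (vec2 t 0) = vec2 (rhoAxis D t) 0 := by
  obtain ⟨hlo, hhi⟩ := ht
  have ht : t < 0 := by linarith
  have ht0 : 2 * t < 0 := by linarith
  have hmul : t * rhoAxis D t = (D ^ 2 - t ^ 2 - 1) / 2 := by
    rw [rhoAxis]; field_simp [ht.ne]
  have hle : rhoAxis D t ≤ 1 := by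
    rw [rhoAxis, div_le_iff_of_neg ht0]; nlinarith
  have hmem : vec2 (rhoAxis D t) 0 ∈ Ufeas D (vec2 t 0) := by
    rw [mem_Ufeas_vec2_iff]; simp only [vec2_apply_zero, vec2_apply_one, hmul]
    constructor <;> linarith
  have hbound : ∀ u ∈ Ufeas D (vec2 t 0), u 0 ≤ rhoAxis D t := fun u hu => by
    rw [mem_Ufeas_vec2_iff] at hu
    rw [rhoAxis, le_div_iff_of_neg ht0]; linarith
  exact ((hρc _ (vec2_ne_of_right_ne (by norm_num)) (vec2_ne_of_right_ne (by norm_num))).2.2 _ hmem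
    fun u hu => norm_vec2_sub_le_of_apply_le hle (hbound u hu)).symm

lemma rhoAxis_sub (D : ℝ) {t t' : ℝ} (ht : t ≠ 0) (ht' : t' ≠ 0) :
    rhoAxis D t - rhoAxis D t' = (t - t') * ((1 - D ^ 2) / (2 * (t * t')) - 1 / 2) := by
  simp only [rhoAxis]
  field_simp
  ring

lemma div_one_sub_le_of_lipschitzOn_rhoAxis {D L : ℝ} (hD0 : 0 < D) (hD1 : D < 1)
    (hL : ∀ t ∈ Ioo (-D - 1) (D - 1), ∀ t' ∈ Ioo (-D - 1) (D - 1),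
      |rhoAxis D t - rhoAxis D t'| ≤ L * |t - t'|) :
    D / (1 - D) ≤ L := by
  set g : ℝ → ℝ := fun s => (1 - D ^ 2) / (2 * ((D - 1 - s) * (D - 1 - 2 * s))) - 1 / 2
  have hslope : ∀ s ∈ Ioo 0 D, g s ≤ L := fun s ⟨hs0, hsD⟩ => by
    have h := hL (D - 1 - s) ⟨by linarith, by linarith⟩ (D - 1 - 2 * s) ⟨by linarith, by linarith⟩
    rw [rhoAxis_sub D (by linarith) (by linarith), abs_mul,
      show D - 1 - s - (D - 1 - 2 * s) = s by ring, abs_of_pos hs0, mul_comm L] at h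
    exact (le_abs_self _).trans (le_of_mul_le_mul_left h hs0)
  have hg0 : g 0 = D / (1 - D) := by
    have h₁ : D - 1 ≠ 0 := by linarith
    have h₂ : 1 - D ≠ 0 := by linarith
    simp only [g, sub_zero, mul_zero]
    field_simp
    ring
  have hlim : Tendsto g (𝓝[>] 0) (𝓝 (D / (1 - D))) := by
    rw [← hg0]
    refine ContinuousAt.tendsto ?_ |>.mono_left nhdsWithin_le_nhds
    refine (continuousAt_const.div (by fun_prop) ?_).sub continuousAt_const
    nlinarith
  exact le_of_tendsto hlim <| eventually_of_mem (Ioo_mem_nhdsGT hD0) hslope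

lemma rhoAxis_one {t : ℝ} (ht : t ≠ 0) : rhoAxis 1 t = -t / 2 := by
  rw [rhoAxis]; field_simp; ring

lemma IsSafeQPSolution.apply_eq_of_mem {D : ℝ} {ρc : ℝ² → ℝ²} (hρc : IsSafeQPSolution D ρc)
    {x : ℝ²} (hx₁ : x ≠ vec2 0 1) (hx₂ : x ≠ vec2 0 (-1)) (hmem : vec2 1 0 ∈ Ufeas D x) :
    ρc x = vec2 1 0 :=
  ((hρc x hx₁ hx₂).2.2 _ hmem fun u _ => by simp).symm

lemma IsSafeQPSolution.tendsto_apply_vec2_nhdsLT {ρc : ℝ² → ℝ²} (hρc : IsSafeQPSolution 1 ρc) :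
    Tendsto (fun t : ℝ => ρc (vec2 t 0)) (𝓝[<] 0) (𝓝 0) := by
  have hlin : Tendsto (fun t : ℝ => (-t / 2) • vec2 1 0) (𝓝[<] 0) (𝓝 0) := by
    have h : Continuous fun t : ℝ => (-t / 2) • vec2 1 0 := by fun_prop
    simpa using h.tendsto 0 |>.mono_left nhdsWithin_le_nhds
  refine hlin.congr' <| eventually_of_mem (Ioo_mem_nhdsLT (by norm_num : (-2 : ℝ) < 0)) ?_
  intro t ht
  dsimp only
  have ht' : t ∈ Ioo (-1 - 1) (1 - 1) := ⟨by linarith [ht.1], by linarith [ht.2]⟩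
  rw [hρc.apply_vec2 le_rfl ht', rhoAxis_one ht.2.ne]
  exact (vec2_eq_smul _).symm

lemma tendsto_apply_vec2_of_lipschitz {L : ℝ} {ρc : ℝ² → ℝ²}
    (hL : ∀ x : ℝ², x ≠ vec2 0 1 → x ≠ vec2 0 (-1) →
      ∀ y : ℝ², y ≠ vec2 0 1 → y ≠ vec2 0 (-1) → ‖ρc x - ρc y‖ ≤ L * ‖x - y‖) :
    Tendsto (fun t : ℝ => ρc (vec2 t 0)) (𝓝 0) (𝓝 (ρc (vec2 0 0))) := by
  have hne : ∀ t : ℝ, vec2 t 0 ≠ vec2 0 1 ∧ vec2 t 0 ≠ vec2 0 (-1) := fun t =>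
    ⟨vec2_ne_of_right_ne (by norm_num), vec2_ne_of_right_ne (by norm_num)⟩
  rw [tendsto_iff_norm_sub_tendsto_zero]
  refine squeeze_zero (fun _ => norm_nonneg _) (fun t => ?_) (g := fun t => L * |t|) ?_
  · simpa [norm_vec2_sub_vec2] using hL _ (hne t).1 (hne t).2 _ (hne 0).1 (hne 0).2
  · simpa using (continuous_abs.tendsto (0 : ℝ)).const_mul L

/-- The non-Lipschitzness claim of Example 1 of the paper: (1) for `0 < D < 1`,
every Lipschitz constant of `t ↦ ρ_c((t,0))` on `(−D−1, D−1)` is at least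
`D/(1−D)`; (2) for `D = 1`, the map `t ↦ ρ_c((t,0))` is discontinuous at `t = 0`
(its left limit is `(0,0)` while `ρ_c((0,0)) = (1,0)`), so `ρ_c` admits no
Lipschitz constant on its domain. -/
theorem stmt18 (D : ℝ) (hD0 : 0 < D) (hD1 : D ≤ 1)
    (ρc : EuclideanSpace ℝ (Fin 2) → EuclideanSpace ℝ (Fin 2))
    (hρc : ∀ x : EuclideanSpace ℝ (Fin 2), x ≠ vec2 0 1 → x ≠ vec2 0 (-1) →
      ρc x ∈ Ufeas D x ∧
      (∀ u ∈ Ufeas D x, ‖ρc x - vec2 1 0‖ ≤ ‖u - vec2 1 0‖) ∧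
      (∀ ρ' ∈ Ufeas D x,
        (∀ u ∈ Ufeas D x, ‖ρ' - vec2 1 0‖ ≤ ‖u - vec2 1 0‖) → ρ' = ρc x)) :
    (D < 1 →
      ∀ L : ℝ,
        (∀ t ∈ Set.Ioo (-D - 1) (D - 1), ∀ t' ∈ Set.Ioo (-D - 1) (D - 1),
          ‖ρc (vec2 t 0) - ρc (vec2 t' 0)‖ ≤ L * |t - t'|) →
        D / (1 - D) ≤ L) ∧
    (D = 1 →
      Filter.Tendsto (fun t : ℝ => ρc (vec2 t 0)) (nhdsWithin 0 (Set.Iio 0))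
        (nhds (0 : EuclideanSpace ℝ (Fin 2))) ∧
      ρc (vec2 0 0) = vec2 1 0 ∧
      ¬∃ L : ℝ, ∀ x : EuclideanSpace ℝ (Fin 2), x ≠ vec2 0 1 → x ≠ vec2 0 (-1) →
        ∀ y : EuclideanSpace ℝ (Fin 2), y ≠ vec2 0 1 → y ≠ vec2 0 (-1) →
          ‖ρc x - ρc y‖ ≤ L * ‖x - y‖) := by
  have hρ : IsSafeQPSolution D ρc := hρc
  refine ⟨fun hD L hL => div_one_sub_le_of_lipschitzOn_rhoAxis hD0 hD fun t ht t' ht' => ?_,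
    fun hD => ?_⟩
  · simpa only [hρ.apply_vec2 hD1 ht, hρ.apply_vec2 hD1 ht', norm_vec2_sub_vec2] using hL t ht t' ht'
  subst hD
  have horigin : ρc (vec2 0 0) = vec2 1 0 :=
    hρ.apply_eq_of_mem (vec2_ne_of_right_ne (by norm_num)) (vec2_ne_of_right_ne (by norm_num))
      (by rw [mem_Ufeas_vec2_iff]; norm_num)
  refine ⟨hρ.tendsto_apply_vec2_nhdsLT, horigin, fun ⟨L, hL⟩ => vec2_one_zero_ne_zero ?_⟩
  rw [← horigin]
  exact tendsto_nhds_unique ((tendsto_apply_vec2_of_lipschitz hL).mono_left nhdsWithin_le_nhds)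
    hρ.tendsto_apply_vec2_nhdsLT
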